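/- The equation 2x^6 - 3a x^5 + 3a x - 2a^2 = 0 has a unique solution x in the open interval (0,1). -/

import Mathlib

/-!
At `x = 0` the left side is `-2a² < 0` and at `x = 1` it is `2(1 - a²) > 0`. It is strictly
increasing on `[0, ∞)`, since its derivative is `12(1 - a)x⁵ + 3a(x - 1)²(4x³ + 3x² + 2x + 1) > 0`
for `x > 0`. The intermediate value theorem gives a root and monotonicity makes it unique.
-/

open Set

noncomputable def sextic (a x : ℝ) : ℝ :=
  2 * x ^ 6 - 3 * a * x ^ 5 + 3 * a * x - 2 * a ^ 2

theorem existsUnique_mem_Ioo_eq_of_strictMonoOn {f : ℝ → ℝ} {a b y : ℝ} (hab : a ≤ b)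
    (hf : ContinuousOn f (Icc a b)) (hmono : StrictMonoOn f (Icc a b))
    (ha : f a < y) (hb : y < f b) :
    ∃! x, x ∈ Ioo a b ∧ f x = y := by
  obtain ⟨x, hx, hfx⟩ := intermediate_value_Ioo hab hf ⟨ha, hb⟩
  refine ⟨x, ⟨hx, hfx⟩, fun z ⟨hz, hfz⟩ => ?_⟩
  exact hmono.injOn (Ioo_subset_Icc_self hz) (Ioo_subset_Icc_self hx) (hfz.trans hfx.symm)

theorem continuous_sextic (a : ℝ) : Continuous (sextic a) := by
  unfold sextic; fun_prop

theorem hasDerivAt_sextic (a x : ℝ) :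
    HasDerivAt (sextic a) (12 * x ^ 5 - 15 * a * x ^ 4 + 3 * a) x := by
  refine (((((hasDerivAt_pow 6 x).const_mul 2).sub ((hasDerivAt_pow 5 x).const_mul (3 * a))).add
    ((hasDerivAt_id x).const_mul (3 * a))).sub_const (2 * a ^ 2)).congr_deriv ?_
  norm_num
  ring

theorem deriv_sextic_pos {a x : ℝ} (ha0 : 0 ≤ a) (ha1 : a < 1) (hx : 0 < x) :
    0 < 12 * x ^ 5 - 15 * a * x ^ 4 + 3 * a := by
  have h1a : 0 < 1 - a := sub_pos.mpr ha1
  calc (0 : ℝ) < 12 * (1 - a) * x ^ 5 + 3 * a * (x - 1) ^ 2 * (4 * x ^ 3 + 3 * x ^ 2 + 2 * x + 1) := by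
        positivity
    _ = 12 * x ^ 5 - 15 * a * x ^ 4 + 3 * a := by ring

theorem strictMonoOn_sextic {a : ℝ} (ha0 : 0 ≤ a) (ha1 : a < 1) :
    StrictMonoOn (sextic a) (Ici 0) := by
  refine strictMonoOn_of_deriv_pos (convex_Ici 0) (continuous_sextic a).continuousOn ?_
  intro x hx
  rw [interior_Ici] at hx
  rw [(hasDerivAt_sextic a x).deriv]
  exact deriv_sextic_pos ha0 ha1 hx

theorem stmt_2 (a : ℝ) (ha0 : 0 < a) (ha1 : a < 1) :
    ∃! x : ℝ, x ∈ Set.Ioo (0 : ℝ) 1 ∧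
      2 * x ^ 6 - 3 * a * x ^ 5 + 3 * a * x - 2 * a ^ 2 = 0 := by
  have hmono : StrictMonoOn (sextic a) (Icc 0 1) :=
    (strictMonoOn_sextic ha0.le ha1).mono Icc_subset_Ici_self
  refine existsUnique_mem_Ioo_eq_of_strictMonoOn zero_le_one (continuous_sextic a).continuousOn
    hmono ?_ ?_
  · nlinarith
  · nlinarith
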